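/- The Goldstein–Price function f(x₁,x₂) = (1 + (x₁+x₂+1)²·(19 − 14x₁ + 3x₁² − 14x₂ + 6x₁x₂ + 3x₂²))·(30 + (2x₁ − 3x₂)²·(18 − 32x₁ + 12x₁² + 48x₂ − 36x₁x₂ + 27x₂²)) attains the value 3 at (x₁, x₂) = (0, −1), and f(x₁,x₂) ≥ 3 for all (x₁,x₂) with −2 ≤ xᵢ ≤ 2. -/
import Mathlib

/-- The Goldstein–Price function. -/
noncomputable def goldsteinPrice (x₁ x₂ : ℝ) : ℝ :=
  (1 + (x₁ + x₂ + 1) ^ 2 *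
      (19 - 14 * x₁ + 3 * x₁ ^ 2 - 14 * x₂ + 6 * x₁ * x₂ + 3 * x₂ ^ 2)) *
  (30 + (2 * x₁ - 3 * x₂) ^ 2 *
      (18 - 32 * x₁ + 12 * x₁ ^ 2 + 48 * x₂ - 36 * x₁ * x₂ + 27 * x₂ ^ 2))

/-- The Goldstein–Price function attains the value `3` at `(0, −1)` and is
bounded below by `3` on the box `[−2, 2]²`. -/
theorem goldsteinPrice_global_min :
    goldsteinPrice 0 (-1) = 3 ∧
      ∀ x₁ x₂ : ℝ, -2 ≤ x₁ → x₁ ≤ 2 → -2 ≤ x₂ → x₂ ≤ 2 →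
        3 ≤ goldsteinPrice x₁ x₂ := by
  constructor
  · norm_num [goldsteinPrice]
  · intro x₁ x₂ _ _ _ _
    unfold goldsteinPrice
    have hA : (1:ℝ) ≤ 1 + (x₁ + x₂ + 1) ^ 2 *
        (19 - 14 * x₁ + 3 * x₁ ^ 2 - 14 * x₂ + 6 * x₁ * x₂ + 3 * x₂ ^ 2) := by
      nlinarith [sq_nonneg (x₁ + x₂ + 1), sq_nonneg (3*(x₁+x₂) - 7),
        sq_nonneg ((x₁ + x₂ + 1) * (3*(x₁+x₂) - 7))]
    have hB : (3:ℝ) ≤ 30 + (2 * x₁ - 3 * x₂) ^ 2 *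
        (18 - 32 * x₁ + 12 * x₁ ^ 2 + 48 * x₂ - 36 * x₁ * x₂ + 27 * x₂ ^ 2) := by
      nlinarith [sq_nonneg ((2*x₁ - 3*x₂ - 3) * (2*x₁ - 3*x₂)),
        sq_nonneg (2*x₁ - 3*x₂ - 3), sq_nonneg (2*x₁ - 3*x₂ + 1), sq_nonneg (2*x₁ - 3*x₂)]
    nlinarith [hA, hB, mul_le_mul hA hB (by linarith) (by linarith)]
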